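/- Let U and W be finite-dimensional real inner product spaces and K a positive integer. Let G_k : U × W → U be of class C¹ for each k = 1,…,K, let û_1,…,û_K ∈ U and ν ≥ 0. Suppose ((u_k)_{k=1}^K, w) is a local minimizer of F((u_k)_k, w) = (1/(2K)) Σ_k ‖u_k − û_k‖_U² + (ν/2) ‖w‖_W² subject to the constraints G_k(u_k, w) = 0 for all k, and suppose that for each k the partial derivative ∂_u G_k(u_k, w) : U → U is an invertible linear map. For each k let μ_k ∈ U be the unique solution of (∂_u G_k(u_k, w))* μ_k + (u_k − û_k) = 0, where * denotes the adjoint with respect to the inner product of U. Then ν w + (1/K) Σ_{k=1}^K (∂_w G_k(u_k, w))* μ_k = 0 in W. -/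

import Mathlib

open ContinuousLinearMap Filter Topology RealInnerProductSpace Finset


/-- first-order necessary KKT conditions for the relaxed outer problem.
Suppose `((u k)ₖ, w)` is a local minimizer of
`F(u, w) = (1/(2K)) ∑ₖ ‖u k − û k‖² + (ν/2) ‖w‖²` subject to `G k (u k, w) = 0`, the
constraint maps being `C¹` with invertible partial derivatives `∂_u G k (u k, w)`, and
let `μ k` be the (unique) solution of `(∂_u G k (u k, w))* μ k + (u k − û k) = 0`.
Then `ν w + (1/K) ∑ₖ (∂_w G k (u k, w))* μ k = 0`. -/
theorem stmt7
    {U W : Type*}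
    [NormedAddCommGroup U] [InnerProductSpace ℝ U] [FiniteDimensional ℝ U]
    [NormedAddCommGroup W] [InnerProductSpace ℝ W] [FiniteDimensional ℝ W]
    (K : ℕ) (hK : 0 < K)
    (G : Fin K → U × W → U)
    (hG : ∀ k, ContDiff ℝ 1 (G k))
    (uhat : Fin K → U) (ν : ℝ) (hν : 0 ≤ ν)
    (u : Fin K → U) (w : W)
    (hfeas : ∀ k, G k (u k, w) = 0)
    (hmin : IsLocalMinOn
      (fun p : (Fin K → U) × W =>
        (1 / (2 * (K : ℝ))) * ∑ k, ‖p.1 k - uhat k‖ ^ 2 + (ν / 2) * ‖p.2‖ ^ 2)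
      {p : (Fin K → U) × W | ∀ k, G k (p.1 k, p.2) = 0} (u, w))
    (hinv : ∀ k, Function.Bijective (fderiv ℝ (fun v : U => G k (v, w)) (u k)))
    (μ : Fin K → U)
    (hμ : ∀ k,
      ContinuousLinearMap.adjoint (fderiv ℝ (fun v : U => G k (v, w)) (u k)) (μ k) +
        (u k - uhat k) = 0) :
    ν • w + (1 / (K : ℝ)) •
      ∑ k, ContinuousLinearMap.adjoint (fderiv ℝ (fun ω : W => G k (u k, ω)) w) (μ k) = 0 := by
  classical
  set A : Fin K → U →L[ℝ] U := fun k => fderiv ℝ (fun v : U => G k (v, w)) (u k) with hA_def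
  set B : Fin K → W →L[ℝ] U := fun k => fderiv ℝ (fun ω : W => G k (u k, ω)) w with hB_def
  set D : Fin K → (U × W) →L[ℝ] U := fun k => fderiv ℝ (G k) (u k, w) with hD_def
  have hGd : ∀ k, HasStrictFDerivAt (G k) (D k) (u k, w) :=
    fun k => (hG k).contDiffAt.hasStrictFDerivAt one_ne_zero
  -- partial derivatives as restrictions of the full derivative
  have hAD : ∀ k (v : U), A k v = D k (v, 0) := by
    intro k v
    have h1 : HasFDerivAt (fun v : U => G k (v, w))
        ((D k).comp ((ContinuousLinearMap.id ℝ U).prod 0)) (u k) :=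
      ((hGd k).hasFDerivAt).comp (u k) ((hasFDerivAt_id (u k)).prodMk (hasFDerivAt_const w (u k)))
    rw [hA_def]
    simp only [h1.fderiv, ContinuousLinearMap.comp_apply, ContinuousLinearMap.prod_apply,
      ContinuousLinearMap.id_apply, ContinuousLinearMap.zero_apply]
  have hBD : ∀ k (h : W), B k h = D k (0, h) := by
    intro k h
    have h1 : HasFDerivAt (fun ω : W => G k (u k, ω))
        ((D k).comp ((0 : W →L[ℝ] U).prod (ContinuousLinearMap.id ℝ W))) w :=
      ((hGd k).hasFDerivAt).comp w ((hasFDerivAt_const (u k) w).prodMk (hasFDerivAt_id w))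
    rw [hB_def]
    simp only [h1.fderiv, ContinuousLinearMap.comp_apply, ContinuousLinearMap.prod_apply,
      ContinuousLinearMap.id_apply, ContinuousLinearMap.zero_apply]
  have hDadd : ∀ k (v : U) (h : W), D k (v, h) = A k v + B k h := by
    intro k v h
    rw [hAD, hBD, ← map_add]
    norm_num
  -- the "augmented" linear map and its bijectivity
  set L : Fin K → (U × W) →L[ℝ] (U × W) := fun k => (D k).prod (ContinuousLinearMap.snd ℝ U W)
    with hL_def
  have hLbij : ∀ k, Function.Bijective (L k) := by
    intro k
    constructor
    · intro p q hpq
      have hpq' : (D k p, p.2) = (D k q, q.2) := by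
        simpa [hL_def, ContinuousLinearMap.prod_apply] using hpq
      rw [Prod.mk.injEq] at hpq'
      have h2 : p.2 = q.2 := hpq'.2
      have h1 : D k p = D k q := hpq'.1
      rw [← Prod.mk.eta (p := p), ← Prod.mk.eta (p := q), hDadd, hDadd, h2] at h1
      have h3 : p.1 = q.1 := (hinv k).injective (add_right_cancel h1)
      exact Prod.ext h3 h2
    · rintro ⟨x, ω⟩
      obtain ⟨v, hv⟩ := (hinv k).surjective (x - B k ω)
      refine ⟨(v, ω), ?_⟩
      simp only [hL_def, ContinuousLinearMap.prod_apply, ContinuousLinearMap.coe_snd']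
      rw [hDadd, hv]
      simp
  -- continuous linear equivalence
  have hE : ∀ k, ∃ e : (U × W) ≃L[ℝ] (U × W), (e : (U × W) →L[ℝ] (U × W)) = L k := by
    intro k
    exact ⟨(LinearEquiv.ofBijective ((L k) : (U × W) →ₗ[ℝ] (U × W)) (hLbij k)).toContinuousLinearEquiv,
      ContinuousLinearMap.ext fun p => rfl⟩
  choose e he using hE
  -- the augmented map and its local inverse
  set H : Fin K → (U × W) → (U × W) := fun k p => (G k p, p.2) with hH_def
  have hHd : ∀ k, HasStrictFDerivAt (H k) ((e k : (U × W) →L[ℝ] (U × W))) (u k, w) := by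
    intro k
    rw [he k]
    exact (hGd k).prodMk hasStrictFDerivAt_snd
  have hHw : ∀ k, H k (u k, w) = (0, w) := by
    intro k
    simp [hH_def, hfeas k]
  set ψ : Fin K → (U × W) → (U × W) := fun k => (hHd k).localInverse (H k) _ (u k, w) with hψ_def
  have hψw : ∀ k, ψ k (0, w) = (u k, w) := by
    intro k
    rw [hψ_def, ← hHw k]
    exact (hHd k).localInverse_apply_image
  have hψd : ∀ k, HasStrictFDerivAt (ψ k) ((e k).symm : (U × W) →L[ℝ] (U × W)) (0, w) := by
    intro k
    rw [hψ_def, ← hHw k]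
    exact (hHd k).to_localInverse
  -- the implicit functions
  set Φ : Fin K → W → U := fun k ω => (ψ k (0, ω)).1 with hΦ_def
  set Φ' : Fin K → W →L[ℝ] U := fun k =>
    (ContinuousLinearMap.fst ℝ U W).comp
      (((e k).symm : (U × W) →L[ℝ] (U × W)).comp
        ((0 : W →L[ℝ] U).prod (ContinuousLinearMap.id ℝ W))) with hΦ'_def
  have hΦd : ∀ k, HasStrictFDerivAt (Φ k) (Φ' k) w := by
    intro k
    exact hasStrictFDerivAt_fst.comp w
      ((hψd k).comp w ((hasStrictFDerivAt_const (0 : U) w).prodMk (hasStrictFDerivAt_id w)))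
  have hΦw : ∀ k, Φ k w = u k := by
    intro k
    rw [hΦ_def]
    simp [hψw k]
  -- eventual feasibility of the implicit curve
  have hfeas' : ∀ k, ∀ᶠ ω in 𝓝 w, G k (Φ k ω, ω) = 0 := by
    intro k
    have ht : Tendsto (fun ω : W => ((0 : U), ω)) (𝓝 w) (𝓝 (H k (u k, w))) := by
      rw [hHw k]
      exact (continuous_const.prodMk continuous_id).tendsto w
    refine (ht.eventually (hHd k).eventually_right_inverse).mono fun ω hω => ?_
    have h2 : (ψ k (0, ω)).2 = ω := congrArg Prod.snd hω
    have h1 : G k (ψ k (0, ω)) = 0 := congrArg Prod.fst hω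
    have : (Φ k ω, ω) = ψ k (0, ω) := Prod.ext rfl h2.symm
    rw [this, h1]
  -- reduction to an unconstrained local minimum
  set m : W → (Fin K → U) × W := fun ω => (fun k => Φ k ω, ω) with hm_def
  have hmw : m w = (u, w) := by
    rw [hm_def]
    exact Prod.ext (funext fun k => hΦw k) rfl
  have hmt : Tendsto m (𝓝 w) (𝓝 (u, w)) := by
    rw [← hmw]
    refine (Tendsto.prodMk_nhds ?_ ?_ : Tendsto m (𝓝 w) (𝓝 (m w)))
    · exact tendsto_pi_nhds.2 fun k => ((hΦd k).hasFDerivAt.continuousAt).tendsto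
    · exact tendsto_id
  have hmS : ∀ᶠ ω in 𝓝 w, m ω ∈ {p : (Fin K → U) × W | ∀ k, G k (p.1 k, p.2) = 0} := by
    refine (eventually_all.2 hfeas').mono fun ω hω => ?_
    exact fun k => hω k
  have hmt' : Tendsto m (𝓝 w) (𝓝[{p : (Fin K → U) × W | ∀ k, G k (p.1 k, p.2) = 0}] (u, w)) :=
    tendsto_nhdsWithin_iff.2 ⟨hmt, hmS⟩
  set f : W → ℝ := fun ω =>
    (1 / (2 * (K : ℝ))) * ∑ k, ‖Φ k ω - uhat k‖ ^ 2 + (ν / 2) * ‖ω‖ ^ 2 with hf_def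
  have hlm : IsLocalMin f w := by
    have := hmt'.eventually hmin
    refine this.mono fun ω hω => ?_
    simpa [hf_def, hm_def, hΦw] using hω
  -- derivative of the reduced objective
  set T : W →L[ℝ] ℝ :=
    (1 / (2 * (K : ℝ))) • (∑ k, (2 : ℕ) • ((innerSL ℝ (Φ k w - uhat k)).comp (Φ' k)))
      + (ν / 2) • ((2 : ℕ) • ((innerSL ℝ w).comp (ContinuousLinearMap.id ℝ W))) with hT_def
  have hfd : HasFDerivAt f T w := by
    refine HasFDerivAt.add ?_ ?_
    · exact ((HasFDerivAt.fun_sum fun k _ =>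
        (((hΦd k).hasFDerivAt).sub_const (uhat k)).norm_sq).const_mul _)
    · exact ((hasFDerivAt_id w).norm_sq).const_mul _
  have hT0 : T = 0 := hlm.hasFDerivAt_eq_zero hfd
  -- key adjoint identity
  have hkey : ∀ k (h : W), ⟪u k - uhat k, Φ' k h⟫ = ⟪(ContinuousLinearMap.adjoint (B k)) (μ k), h⟫ := by
    intro k h
    set r := (e k).symm (0, h) with hr_def
    have her : L k r = ((0 : U), h) := by
      rw [← he k]; exact (e k).apply_symm_apply (0, h)
    have hr2 : r.2 = h := by
      have := congrArg Prod.snd her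
      simpa [hL_def] using this
    have hr1 : D k r = 0 := by
      have := congrArg Prod.fst her
      simpa [hL_def] using this
    have hAB : A k r.1 + B k h = 0 := by
      rw [← hDadd, ← hr2, Prod.mk.eta]
      exact hr1
    have hΦ'h : Φ' k h = r.1 := by
      simp [hΦ'_def, hr_def]
    have huμ : u k - uhat k = -((ContinuousLinearMap.adjoint (A k)) (μ k)) :=
      eq_neg_of_add_eq_zero_right (hμ k)
    have hAr : A k r.1 = -(B k h) := eq_neg_of_add_eq_zero_left hAB
    rw [hΦ'h, huμ, inner_neg_left, ContinuousLinearMap.adjoint_inner_left, hAr, inner_neg_right,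
      neg_neg, ← ContinuousLinearMap.adjoint_inner_left]
  -- conclusion
  have hKne : (K : ℝ) ≠ 0 := Nat.cast_ne_zero.2 hK.ne'
  refine ext_inner_right ℝ fun h => ?_
  have hTh : T h = (0 : W →L[ℝ] ℝ) h := by rw [hT0]
  simp only [hT_def, ContinuousLinearMap.add_apply, ContinuousLinearMap.smul_apply,
    ContinuousLinearMap.sum_apply, ContinuousLinearMap.comp_apply, ContinuousLinearMap.id_apply,
    innerSL_apply_apply, ContinuousLinearMap.zero_apply, smul_eq_mul, nsmul_eq_mul, Nat.cast_ofNat,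
    hΦw] at hTh
  simp only [inner_add_left, inner_zero_left, real_inner_smul_left, sum_inner]
  have hc : ∀ k ∈ Finset.univ, ⟪(ContinuousLinearMap.adjoint (B k)) (μ k), h⟫
      = ⟪u k - uhat k, (Φ' k) h⟫ := fun k _ => (hkey k h).symm
  rw [Finset.sum_congr rfl hc]
  rw [← Finset.mul_sum] at hTh
  field_simp at hTh ⊢
  linarith [hTh]
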